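/- arXiv:1812.03108 — 2 statements merged into one kernel-verified Lean document; each statement's English description precedes it below -/
import Mathlib

section
/- Let X be a random element of L²([0,1]) with P(‖X‖ > u) > 0 for all u > 0, such that u ↦ u^α P(‖X‖ > u) is slowly varying for some α > 0, and such that the conditional distribution of X/‖X‖ given ‖X‖ > u (the probability measure B ↦ P(X/‖X‖ ∈ B, ‖X‖ > u)/P(‖X‖ > u)) converges weakly, as u → ∞, to a probability measure Γ on L²([0,1]). Let Y = X ⊗ X ∈ L²([0,1]²). Then ‖Y‖ = ‖X‖², P(‖Y‖ > u) = P(‖X‖ > u^{1/2}) so that u ↦ u^{α/2} P(‖Y‖ > u) is slowly varying, and the conditional distribution of Y/‖Y‖ given ‖Y‖ > u converges weakly, as u → ∞, to the pushforward of Γ under the continuous map x ↦ x ⊗ x. In particular, Y is regularly varying in L²([0,1]²) with index α/2 and its angular measure is the image of the angular measure of X under x ↦ x ⊗ x. -/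
open MeasureTheory ProbabilityTheory Filter Topology unitInterval
open scoped RealInnerProductSpace

noncomputable section

/-- `L²([0,1])`, the space of square-integrable functions on the unit interval. -/
abbrev Hsp : Type := Lp ℝ 2 (volume : Measure I)

/-- `L²([0,1]²)`, the space of square-integrable kernels on the unit square. -/
abbrev Ksp : Type := Lp ℝ 2 (volume : Measure (I × I))

lemma memℒp_tensorKernel (f g : Hsp) :
    MemLp (fun q : I × I => f q.1 * g q.2) 2 (volume : Measure (I × I)) := by
  have hf : Integrable (fun t => (f t) ^ 2) (volume : Measure I) :=
    (memLp_two_iff_integrable_sq (Lp.aestronglyMeasurable f)).mp (Lp.memLp f)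
  have hg : Integrable (fun t => (g t) ^ 2) (volume : Measure I) :=
    (memLp_two_iff_integrable_sq (Lp.aestronglyMeasurable g)).mp (Lp.memLp g)
  have hfg : Integrable (fun q : I × I => (f q.1) ^ 2 * (g q.2) ^ 2) volume := by
    rw [Measure.volume_eq_prod]; exact hf.mul_prod hg
  have hmeas : AEStronglyMeasurable (fun q : I × I => f q.1 * g q.2) volume := by
    rw [Measure.volume_eq_prod]
    exact ((Lp.aestronglyMeasurable f).comp_quasiMeasurePreserving
      Measure.quasiMeasurePreserving_fst).mul
      ((Lp.aestronglyMeasurable g).comp_quasiMeasurePreserving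
        Measure.quasiMeasurePreserving_snd)
  rw [memLp_two_iff_integrable_sq hmeas]
  have heq : (fun q : I × I => (f q.1 * g q.2) ^ 2)
      = fun q : I × I => (f q.1) ^ 2 * (g q.2) ^ 2 := by
    funext q; ring
  rw [heq]; exact hfg

/-- `x ⊗ y` : the element of `L²([0,1]²)` represented by the kernel
`(t,s) ↦ x t * y s`. -/
def tensor (f g : Hsp) : Ksp :=
  (memℒp_tensorKernel f g).toLp (fun q : I × I => f q.1 * g q.2)

instance : MeasurableSpace Hsp := borel Hsp
instance : BorelSpace Hsp := ⟨rfl⟩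

/-! Since `‖x ⊗ x‖ = ‖x‖²`, the event `‖Y‖ > u` is the event `‖X‖ > √u`: the tail function of
`Y` is that of `X` read at `√u`, and slow variation survives the substitution `u ↦ u ^ (1/2)`.
Since `x ↦ x ⊗ x` is moreover continuous and homogeneous of degree two,
`Y / ‖Y‖ = (X / ‖X‖) ⊗ (X / ‖X‖)`, so the angular means of `Y` at level `u` are those of `X` at
level `√u`, tested against `f (· ⊗ ·)`. -/

def IsSlowlyVarying (L : ℝ → ℝ) : Prop :=
  ∀ l : ℝ, 0 < l → Tendsto (fun u => L (l * u) / L u) atTop (𝓝 1)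

lemma IsSlowlyVarying.congr {L L' : ℝ → ℝ} (hL : IsSlowlyVarying L) (h : L =ᶠ[atTop] L') :
    IsSlowlyVarying L' := by
  intro l hl
  have hlu : Tendsto (l * ·) atTop atTop := tendsto_id.const_mul_atTop hl
  refine (hL l hl).congr' ?_
  filter_upwards [hlu.eventually h, h] with u hlu hu
  rw [hlu, hu]

lemma IsSlowlyVarying.comp_rpow {L : ℝ → ℝ} (hL : IsSlowlyVarying L) {p : ℝ} (hp : 0 < p) :
    IsSlowlyVarying fun u => L (u ^ p) := by
  intro l hl
  refine ((hL (l ^ p) (Real.rpow_pos_of_pos hl p)).comp (tendsto_rpow_atTop hp)).congr' ?_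
  filter_upwards [eventually_ge_atTop 0] with u hu
  rw [Function.comp_apply, Real.mul_rpow hl.le hu]

/-- The mean of `f` under the conditional law of `X / ‖X‖` given `‖X‖ > u`. -/
def tailAngularMean {Ω E : Type*} [MeasurableSpace Ω] [Norm E] [SMul ℝ E]
    (μ : Measure Ω) (X : Ω → E) (f : E → ℝ) (u : ℝ) : ℝ :=
  (∫ ω in {ω | u < ‖X ω‖}, f (‖X ω‖⁻¹ • X ω) ∂μ) / (μ {ω | u < ‖X ω‖}).toReal

section SquareHomogeneous

variable {Ω E F : Type*} [SeminormedAddCommGroup E] [SeminormedAddCommGroup F] {Φ : E → F}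

lemma setOf_lt_norm_comp_eq (hnorm : ∀ x, ‖Φ x‖ = ‖x‖ ^ 2) (X : Ω → E) {u : ℝ} (hu : 0 ≤ u) :
    {ω | u < ‖Φ (X ω)‖} = {ω | √u < ‖X ω‖} := by
  ext ω
  simp only [Set.mem_ofPred_eq, hnorm]
  exact (Real.sqrt_lt hu (norm_nonneg _)).symm

lemma isSlowlyVarying_tail_comp [MeasurableSpace Ω] (μ : Measure Ω)
    (hnorm : ∀ x, ‖Φ x‖ = ‖x‖ ^ 2) (X : Ω → E) {α : ℝ}
    (hX : IsSlowlyVarying fun u => u ^ α * (μ {ω | u < ‖X ω‖}).toReal) :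
    IsSlowlyVarying fun u => u ^ (α / 2) * (μ {ω | u < ‖Φ (X ω)‖}).toReal := by
  refine (hX.comp_rpow one_half_pos).congr ?_
  filter_upwards [eventually_ge_atTop 0] with u hu
  rw [setOf_lt_norm_comp_eq hnorm X hu, Real.sqrt_eq_rpow, ← Real.rpow_mul hu, one_div_mul_eq_div]

lemma tailAngularMean_comp [SMul ℝ E] [SMul ℝ F] [MeasurableSpace Ω] (μ : Measure Ω)
    (hnorm : ∀ x, ‖Φ x‖ = ‖x‖ ^ 2) (hsmul : ∀ (c : ℝ) x, Φ (c • x) = c ^ 2 • Φ x)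
    (X : Ω → E) (f : F → ℝ) {u : ℝ} (hu : 0 ≤ u) :
    tailAngularMean μ (fun ω => Φ (X ω)) f u = tailAngularMean μ X (fun x => f (Φ x)) √u := by
  have hdir : ∀ x, ‖Φ x‖⁻¹ • Φ x = Φ (‖x‖⁻¹ • x) := fun x => by rw [hsmul, hnorm, inv_pow]
  simp only [tailAngularMean, setOf_lt_norm_comp_eq hnorm X hu, hdir]

lemma tendsto_tailAngularMean_comp [MeasurableSpace E] [SMul ℝ E] [SMul ℝ F]
    [MeasurableSpace Ω] {μ : Measure Ω} (hcont : Continuous Φ)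
    (hnorm : ∀ x, ‖Φ x‖ = ‖x‖ ^ 2) (hsmul : ∀ (c : ℝ) x, Φ (c • x) = c ^ 2 • Φ x)
    {X : Ω → E} {Γ : Measure E}
    (hX : ∀ f : BoundedContinuousFunction E ℝ,
      Tendsto (tailAngularMean μ X f) atTop (𝓝 (∫ x, f x ∂Γ)))
    (f : BoundedContinuousFunction F ℝ) :
    Tendsto (tailAngularMean μ (fun ω => Φ (X ω)) f) atTop (𝓝 (∫ x, f (Φ x) ∂Γ)) := by
  refine ((hX (f.compContinuous ⟨Φ, hcont⟩)).comp Real.tendsto_sqrt_atTop).congr' ?_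
  filter_upwards [eventually_ge_atTop 0] with u hu
  exact (tailAngularMean_comp μ hnorm hsmul X f hu).symm

end SquareHomogeneous

lemma coeFn_tensor (f g : Hsp) : ⇑(tensor f g) =ᵐ[volume] fun q : I × I => f q.1 * g q.2 :=
  (memℒp_tensorKernel f g).coeFn_toLp

lemma tensor_add_left (f f' g : Hsp) : tensor (f + f') g = tensor f g + tensor f' g := by
  apply Lp.ext
  filter_upwards [coeFn_tensor (f + f') g,
    Measure.quasiMeasurePreserving_fst.ae_eq_comp (Lp.coeFn_add f f'),
    Lp.coeFn_add (tensor f g) (tensor f' g), coeFn_tensor f g, coeFn_tensor f' g]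
    with q h₁ h₂ h₃ h₄ h₅
  simp only [Function.comp_apply, Pi.add_apply] at *
  rw [h₁, h₃, h₄, h₅, h₂, add_mul]

lemma tensor_add_right (f g g' : Hsp) : tensor f (g + g') = tensor f g + tensor f g' := by
  apply Lp.ext
  filter_upwards [coeFn_tensor f (g + g'),
    Measure.quasiMeasurePreserving_snd.ae_eq_comp (Lp.coeFn_add g g'),
    Lp.coeFn_add (tensor f g) (tensor f g'), coeFn_tensor f g, coeFn_tensor f g']
    with q h₁ h₂ h₃ h₄ h₅
  simp only [Function.comp_apply, Pi.add_apply] at *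
  rw [h₁, h₃, h₄, h₅, h₂, mul_add]

lemma tensor_smul_left (c : ℝ) (f g : Hsp) : tensor (c • f) g = c • tensor f g := by
  apply Lp.ext
  filter_upwards [coeFn_tensor (c • f) g,
    Measure.quasiMeasurePreserving_fst.ae_eq_comp (Lp.coeFn_smul c f),
    Lp.coeFn_smul c (tensor f g), coeFn_tensor f g] with q h₁ h₂ h₃ h₄
  simp only [Function.comp_apply, Pi.smul_apply, smul_eq_mul] at *
  rw [h₁, h₃, h₄, h₂, mul_assoc]

lemma tensor_smul_right (c : ℝ) (f g : Hsp) : tensor f (c • g) = c • tensor f g := by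
  apply Lp.ext
  filter_upwards [coeFn_tensor f (c • g),
    Measure.quasiMeasurePreserving_snd.ae_eq_comp (Lp.coeFn_smul c g),
    Lp.coeFn_smul c (tensor f g), coeFn_tensor f g] with q h₁ h₂ h₃ h₄
  simp only [Function.comp_apply, Pi.smul_apply, smul_eq_mul] at *
  rw [h₁, h₃, h₄, h₂, mul_left_comm]

lemma inner_tensor_self (f g : Hsp) : ⟪tensor f g, tensor f g⟫ = ⟪f, f⟫ * ⟪g, g⟫ := by
  simp only [L2.inner_def, RCLike.inner_apply, conj_trivial]
  calc ∫ q, tensor f g q * tensor f g q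
      = ∫ q : I × I, (f q.1 * f q.1) * (g q.2 * g q.2) := by
        refine integral_congr_ae ?_
        filter_upwards [coeFn_tensor f g] with q hq
        rw [hq]; ring
    _ = (∫ t, f t * f t) * ∫ s, g s * g s :=
        integral_prod_mul (fun t => f t * f t) (fun s => g s * g s)

lemma norm_tensor (f g : Hsp) : ‖tensor f g‖ = ‖f‖ * ‖g‖ := by
  have h := inner_tensor_self f g
  simp only [real_inner_self_eq_norm_sq] at h
  rw [← mul_pow] at h
  exact (pow_left_inj₀ (norm_nonneg _) (by positivity) two_ne_zero).mp h

def tensorCLM : Hsp →L[ℝ] Hsp →L[ℝ] Ksp :=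
  LinearMap.mkContinuous₂
    (LinearMap.mk₂ ℝ tensor tensor_add_left tensor_smul_left tensor_add_right tensor_smul_right) 1
    fun f g => by rw [LinearMap.mk₂_apply, norm_tensor, one_mul]

lemma continuous_tensor_self : Continuous fun x : Hsp => tensor x x :=
  tensorCLM.isBoundedBilinearMap.continuous.comp (continuous_id.prodMk continuous_id)

theorem statement1_general {Ω : Type*} [MeasureSpace Ω]
    (X : Ω → Hsp)
    (α : ℝ)
    (hslow : ∀ l : ℝ, 0 < l →
      Tendsto (fun u : ℝ =>
          ((l * u) ^ α * (ℙ {ω | l * u < ‖X ω‖}).toReal)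
            / (u ^ α * (ℙ {ω | u < ‖X ω‖}).toReal))
        atTop (𝓝 1))
    (Γ : Measure Hsp)
    (hang : ∀ f : BoundedContinuousFunction Hsp ℝ,
      Tendsto (fun u : ℝ =>
          (∫ ω in {ω | u < ‖X ω‖}, f (‖X ω‖⁻¹ • X ω) ∂ℙ)
            / (ℙ {ω | u < ‖X ω‖}).toReal)
        atTop (𝓝 (∫ x, f x ∂Γ))) :
    (∀ x : Hsp, ‖tensor x x‖ = ‖x‖ ^ 2)
    ∧ (∀ u : ℝ, 0 < u →
        ℙ {ω | u < ‖tensor (X ω) (X ω)‖} = ℙ {ω | Real.sqrt u < ‖X ω‖})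
    ∧ (∀ l : ℝ, 0 < l →
      Tendsto (fun u : ℝ =>
          ((l * u) ^ (α / 2) * (ℙ {ω | l * u < ‖tensor (X ω) (X ω)‖}).toReal)
            / (u ^ (α / 2) * (ℙ {ω | u < ‖tensor (X ω) (X ω)‖}).toReal))
        atTop (𝓝 1))
    ∧ (∀ f : BoundedContinuousFunction Ksp ℝ,
      Tendsto (fun u : ℝ =>
          (∫ ω in {ω | u < ‖tensor (X ω) (X ω)‖},
              f (‖tensor (X ω) (X ω)‖⁻¹ • tensor (X ω) (X ω)) ∂ℙ)
            / (ℙ {ω | u < ‖tensor (X ω) (X ω)‖}).toReal)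
        atTop (𝓝 (∫ x, f (tensor x x) ∂Γ))) := by
  have hnorm : ∀ x : Hsp, ‖tensor x x‖ = ‖x‖ ^ 2 := fun x => by rw [norm_tensor, sq]
  have hsmul : ∀ (c : ℝ) (x : Hsp), tensor (c • x) (c • x) = c ^ 2 • tensor x x := fun c x => by
    rw [tensor_smul_left, tensor_smul_right, smul_smul, sq]
  exact ⟨hnorm, fun u hu => by rw [setOf_lt_norm_comp_eq hnorm X hu.le],
    isSlowlyVarying_tail_comp ℙ hnorm X hslow,
    tendsto_tailAngularMean_comp continuous_tensor_self hnorm hsmul hang⟩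

/-- Let `X` be a random element of `L²([0,1])` with positive norm
tails, `u ↦ u^α P(‖X‖ > u)` slowly varying for some `α > 0`, and conditional
distribution of `X/‖X‖` given `‖X‖ > u` converging weakly to a probability measure
`Γ`. Let `Y = X ⊗ X ∈ L²([0,1]²)`. Then `‖Y‖ = ‖X‖²`, `P(‖Y‖ > u) = P(‖X‖ > u^{1/2})`
(so `u ↦ u^{α/2} P(‖Y‖ > u)` is slowly varying), and the conditional distribution of
`Y/‖Y‖` given `‖Y‖ > u` converges weakly to the pushforward of `Γ` under
`x ↦ x ⊗ x`; i.e. `Y` is regularly varying with index `α/2` and angular measure the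
image of that of `X`. -/
theorem statement1 {Ω : Type*} [MeasureSpace Ω] [IsProbabilityMeasure (ℙ : Measure Ω)]
    (X : Ω → Hsp) (hX : Measurable X)
    (α : ℝ) (hα : 0 < α)
    (hpos : ∀ u : ℝ, 0 < u → 0 < ℙ {ω | u < ‖X ω‖})
    (hslow : ∀ l : ℝ, 0 < l →
      Tendsto (fun u : ℝ =>
          ((l * u) ^ α * (ℙ {ω | l * u < ‖X ω‖}).toReal)
            / (u ^ α * (ℙ {ω | u < ‖X ω‖}).toReal))
        atTop (𝓝 1))
    (Γ : Measure Hsp) [IsProbabilityMeasure Γ]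
    (hang : ∀ f : BoundedContinuousFunction Hsp ℝ,
      Tendsto (fun u : ℝ =>
          (∫ ω in {ω | u < ‖X ω‖}, f (‖X ω‖⁻¹ • X ω) ∂ℙ)
            / (ℙ {ω | u < ‖X ω‖}).toReal)
        atTop (𝓝 (∫ x, f x ∂Γ))) :
    (∀ x : Hsp, ‖tensor x x‖ = ‖x‖ ^ 2)
    ∧ (∀ u : ℝ, 0 < u →
        ℙ {ω | u < ‖tensor (X ω) (X ω)‖} = ℙ {ω | Real.sqrt u < ‖X ω‖})
    ∧ (∀ l : ℝ, 0 < l →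
      Tendsto (fun u : ℝ =>
          ((l * u) ^ (α / 2) * (ℙ {ω | l * u < ‖tensor (X ω) (X ω)‖}).toReal)
            / (u ^ (α / 2) * (ℙ {ω | u < ‖tensor (X ω) (X ω)‖}).toReal))
        atTop (𝓝 1))
    ∧ (∀ f : BoundedContinuousFunction Ksp ℝ,
      Tendsto (fun u : ℝ =>
          (∫ ω in {ω | u < ‖tensor (X ω) (X ω)‖},
              f (‖tensor (X ω) (X ω)‖⁻¹ • tensor (X ω) (X ω)) ∂ℙ)
            / (ℙ {ω | u < ‖tensor (X ω) (X ω)‖}).toReal)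
        atTop (𝓝 (∫ x, f (tensor x x) ∂Γ))) :=
  statement1_general X α hslow Γ hang
end
end

section
/- Let X be a random element of a normed space with P(‖X‖ > u) > 0 for all u > 0 and suppose u ↦ u^α P(‖X‖ > u) is slowly varying, where α ∈ (2,4). Let (a_N) be a sequence with a_N → ∞ and N · P(‖X‖ > a_N) → 1, and set k_N = (α/(4−α))^{2/α} a_N². Then N k_N^{−2} E[‖X‖⁴ 1{‖X‖² ≤ k_N}] → 1 as N → ∞. -/
/-!
Write `G u = P(‖X‖ > u)`. The layer-cake formula gives
`E[‖X‖⁴; ‖X‖ ≤ x] = 4 ∫₀ˣ t³ G t dt - x⁴ G x`, and Karamata's theorem for the tail `G`, regularly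
varying of index `-α` with `α < 4`, gives `∫₀ˣ t³ G t dt ~ x⁴ G x / (4 - α)`; hence
`E[‖X‖⁴; ‖X‖ ≤ x] ~ α / (4 - α) · x⁴ G x`. At `x = l a_N` with `l ^ α = α / (4 - α)` one has
`k_N = x²` and `N x⁴ G x / k_N² = N G(a_N) · G(l a_N) / G(a_N) → l ^ (-α)`, which cancels the
constant `α / (4 - α)`.

Karamata's theorem is proved by splitting `∫₀ˣ` at `εx`: after the substitution `t = s x` the
part over `[εx, x]` converges by dominated convergence to `∫_ε^1 s^(3-α) ds`, while a
Potter-type bound `∫₀ʸ t³ G t dt ≤ B y⁴ G y`, obtained by halving `y`, makes the part over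
`[0, εx]` of order `ε^(4-α)`.
-/

open MeasureTheory ProbabilityTheory Filter Topology Set

def IsRegularlyVarying (G : ℝ → ℝ) (ρ : ℝ) : Prop :=
  ∀ l : ℝ, 0 < l → Tendsto (fun u => G (l * u) / G u) atTop (𝓝 (l ^ ρ))

theorem IsRegularlyVarying.of_rpow_mul {G : ℝ → ℝ} {ρ α : ℝ}
    (h : IsRegularlyVarying (fun u => u ^ α * G u) ρ) : IsRegularlyVarying G (ρ - α) := by
  intro l hl
  have hratio : ∀ᶠ u in atTop,
      l ^ (-α) * ((l * u) ^ α * G (l * u) / (u ^ α * G u)) = G (l * u) / G u := by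
    filter_upwards [eventually_gt_atTop 0] with u hu
    rw [Real.mul_rpow hl.le hu.le, Real.rpow_neg hl.le, mul_comm (l ^ α), mul_assoc,
      mul_div_mul_left _ _ (Real.rpow_pos_of_pos hu α).ne', ← mul_div_assoc,
      ← mul_assoc, inv_mul_cancel₀ (Real.rpow_pos_of_pos hl α).ne', one_mul]
  have := ((h l hl).const_mul (l ^ (-α))).congr' hratio
  rwa [← Real.rpow_add hl, neg_add_eq_sub] at this

theorem rpow_inv_rpow_neg_mul_self {b x : ℝ} (hb : 0 < b) (hx : x ≠ 0) :
    (b ^ x⁻¹) ^ (-x) * b = 1 := by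
  rw [← Real.rpow_mul hb.le, inv_mul_eq_div, neg_div, div_self hx, Real.rpow_neg_one,
    inv_mul_cancel₀ hb.ne']

theorem forall_ge_of_Icc_of_half {P : ℝ → Prop} {u₀ : ℝ} (hu₀ : 0 < u₀)
    (hbase : ∀ x ∈ Icc u₀ (2 * u₀), P x) (hstep : ∀ x, 2 * u₀ < x → P (x / 2) → P x) :
    ∀ x, u₀ ≤ x → P x := by
  have hdyadic : ∀ m : ℕ, ∀ x ∈ Icc u₀ (2 ^ m * u₀), P x := by
    intro m
    induction m with
    | zero => exact fun x hx => hbase x ⟨hx.1, by linarith [hx.2, pow_zero (2 : ℝ)]⟩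
    | succ m ih =>
      intro x hx
      rcases le_or_gt x (2 * u₀) with h | h
      · exact hbase x ⟨hx.1, h⟩
      · rw [pow_succ] at hx
        exact hstep x h (ih _ ⟨by linarith, by linarith [hx.2]⟩)
  intro x hx
  obtain ⟨m, hm⟩ := pow_unbounded_of_one_lt (x / u₀) one_lt_two
  exact hdyadic m x ⟨hx, ((div_lt_iff₀ hu₀).mp hm).le⟩

theorem tendsto_of_forall_eventually_abs_sub_le {ι : Type*} {l : Filter ι} {f : ι → ℝ} {L : ℝ}
    {e : ℝ → ℝ} (he : Tendsto e (𝓝[>] 0) (𝓝 0))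
    (h : ∀ᶠ ε in 𝓝[>] 0, ∃ g : ι → ℝ, Tendsto g l (𝓝 (e ε)) ∧ ∀ᶠ i in l, |f i - L| ≤ g i) :
    Tendsto f l (𝓝 L) := by
  rw [Metric.tendsto_nhds]
  intro δ hδ
  obtain ⟨ε, heδ, g, hg, hfg⟩ := ((he.eventually (gt_mem_nhds hδ)).and h).exists
  filter_upwards [hfg, hg.eventually (gt_mem_nhds heδ)] with i hfi hgi
  rw [Real.dist_eq]
  linarith

section PowMulIntegral

variable {G : ℝ → ℝ}

theorem Antitone.intervalIntegrable_pow_mul (hG : Antitone G) (n : ℕ) (a b : ℝ) :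
    IntervalIntegrable (fun t => t ^ n * G t) volume a b :=
  hG.intervalIntegrable.continuousOn_mul (continuous_pow n).continuousOn

theorem Antitone.integral_pow_mul_le (hG : Antitone G) (hG0 : ∀ u, 0 ≤ G u) (n : ℕ) {a b : ℝ}
    (ha : 0 ≤ a) (hab : a ≤ b) :
    ∫ t in a..b, t ^ n * G t ≤ (b - a) * (b ^ n * G a) := by
  calc ∫ t in a..b, t ^ n * G t ≤ ∫ _ in a..b, b ^ n * G a :=
        intervalIntegral.integral_mono_on hab (hG.intervalIntegrable_pow_mul n a b)
          intervalIntegrable_const fun t ht =>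
            mul_le_mul (pow_le_pow_left₀ (ha.trans ht.1) ht.2 n) (hG ht.1) (hG0 t)
              (pow_nonneg (ha.trans hab) n)
    _ = (b - a) * (b ^ n * G a) := by rw [intervalIntegral.integral_const, smul_eq_mul]

theorem integral_pow_mul_comp_mul_right (n : ℕ) {x : ℝ} (hx : x ≠ 0) (a b : ℝ) :
    ∫ t in a * x..b * x, t ^ n * G t = x ^ (n + 1) * ∫ s in a..b, s ^ n * G (s * x) := by
  have h := intervalIntegral.integral_comp_mul_right (fun t => t ^ n * G t) hx (a := a) (b := b)
  simp only [mul_pow, mul_right_comm _ (x ^ n), intervalIntegral.integral_mul_const,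
    smul_eq_mul] at h
  rw [← mul_inv_cancel_left₀ hx (∫ t in a * x..b * x, t ^ n * G t), ← h]
  ring

theorem integral_pow_mul_rpow_neg {α ε : ℝ} (n : ℕ) (hα : α < n + 1) (hε : 0 < ε) :
    ∫ s in ε..1, s ^ n * s ^ (-α) = (1 - ε ^ (n + 1 - α)) / (n + 1 - α) := by
  have hpow : EqOn (fun s : ℝ => s ^ n * s ^ (-α)) (fun s => s ^ ((n : ℝ) - α)) (uIcc ε 1) := by
    intro s hs
    have hs0 : 0 < s := (lt_min hε one_pos).trans_le hs.1
    dsimp only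
    rw [← Real.rpow_natCast, ← Real.rpow_add hs0, sub_eq_add_neg]
  rw [intervalIntegral.integral_congr hpow, integral_rpow (Or.inl (by linarith)), Real.one_rpow]
  ring_nf

variable {α : ℝ} {n : ℕ}

theorem IsRegularlyVarying.exists_le_mul_of_half (hreg : IsRegularlyVarying G (-α))
    (hpos : ∀ u, 0 < G u) {K : ℝ} (hK : (2 : ℝ) ^ α < K) :
    ∃ u₀, 0 < u₀ ∧ ∀ v, u₀ ≤ v → G (v / 2) ≤ K * G v := by
  have hlim : (2⁻¹ : ℝ) ^ (-α) < K := by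
    rwa [Real.inv_rpow zero_le_two, ← Real.rpow_neg zero_le_two, neg_neg]
  obtain ⟨u₁, hu₁⟩ := eventually_atTop.mp <|
    (hreg 2⁻¹ (by norm_num)).eventually (eventually_lt_nhds hlim)
  refine ⟨max u₁ 1, lt_max_of_lt_right one_pos, fun v hv => ?_⟩
  have := hu₁ v (le_of_max_le_left hv)
  rw [div_lt_iff₀ (hpos v), inv_mul_eq_div] at this
  exact this.le

theorem Antitone.integral_pow_mul_le_of_half (hG : Antitone G) (hG0 : ∀ u, 0 ≤ G u)
    {B K x : ℝ} (hB0 : 0 ≤ B) (hB : K * 2 ^ n ≤ B * (2 ^ (n + 1) - K)) (hx : 0 ≤ x)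
    (hGx : G (x / 2) ≤ K * G x)
    (hhalf : ∫ t in 0..x / 2, t ^ n * G t ≤ B * ((x / 2) ^ (n + 1) * G (x / 2))) :
    ∫ t in 0..x, t ^ n * G t ≤ B * (x ^ (n + 1) * G x) := by
  have := hG0 x
  have := hG0 (x / 2)
  rw [← intervalIntegral.integral_add_adjacent_intervals
    (hG.intervalIntegrable_pow_mul n 0 (x / 2)) (hG.intervalIntegrable_pow_mul n (x / 2) x)]
  calc (∫ t in 0..x / 2, t ^ n * G t) + ∫ t in x / 2..x, t ^ n * G t
      ≤ B * ((x / 2) ^ (n + 1) * G (x / 2)) + (x - x / 2) * (x ^ n * G (x / 2)) := by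
        gcongr
        exact hG.integral_pow_mul_le hG0 n (by linarith) (by linarith)
    _ ≤ B * ((x / 2) ^ (n + 1) * (K * G x)) + (x - x / 2) * (x ^ n * (K * G x)) := by
        have : 0 ≤ x - x / 2 := by linarith
        gcongr
    _ = (B * K + K * 2 ^ n) / 2 ^ (n + 1) * (x ^ (n + 1) * G x) := by
        rw [div_pow]
        field_simp
        ring
    _ ≤ B * (x ^ (n + 1) * G x) := by
        gcongr
        rw [div_le_iff₀ (by positivity)]
        linarith

theorem IsRegularlyVarying.exists_integral_pow_mul_le (hreg : IsRegularlyVarying G (-α))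
    (hG : Antitone G) (hpos : ∀ u, 0 < G u) (hα : α < n + 1) :
    ∃ B u₀, 0 < u₀ ∧ ∀ x, u₀ ≤ x → ∫ t in 0..x, t ^ n * G t ≤ B * (x ^ (n + 1) * G x) := by
  obtain ⟨K, hαK, hKn⟩ : ∃ K, (2 : ℝ) ^ α < K ∧ K < 2 ^ (n + 1) := by
    refine exists_between ?_
    rw [← Real.rpow_natCast]
    push_cast
    exact Real.rpow_lt_rpow_of_exponent_lt one_lt_two hα
  obtain ⟨u₀, hu₀, hhalf⟩ := hreg.exists_le_mul_of_half hpos hαK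
  have hG0 (u : ℝ) : 0 ≤ G u := (hpos u).le
  have hG2u₀ := hpos (2 * u₀)
  have hGzero := hG0 0
  -- `c` serves for `x ∈ [u₀, 2u₀]`, the other term makes the halving step close up
  set c := 2 * u₀ * ((2 * u₀) ^ n * G 0) / (u₀ ^ (n + 1) * G (2 * u₀))
  set B := max c (K * 2 ^ n / (2 ^ (n + 1) - K))
  have hB : K * 2 ^ n ≤ B * (2 ^ (n + 1) - K) :=
    (div_le_iff₀ (sub_pos.2 hKn)).mp (le_max_right _ _)
  have hB0 : 0 ≤ B := le_max_of_le_left (by positivity)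
  refine ⟨B, u₀, hu₀, forall_ge_of_Icc_of_half hu₀ (fun x hx => ?_) fun x hx ih =>
    hG.integral_pow_mul_le_of_half hG0 hB0 hB (by linarith) (hhalf x (by linarith)) ih⟩
  have hx0 : 0 ≤ x := hu₀.le.trans hx.1
  calc ∫ t in 0..x, t ^ n * G t ≤ (x - 0) * (x ^ n * G 0) :=
        hG.integral_pow_mul_le hG0 n le_rfl hx0
    _ ≤ 2 * u₀ * ((2 * u₀) ^ n * G 0) := by
        rw [sub_zero]
        gcongr <;> exact hx.2
    _ = c * (u₀ ^ (n + 1) * G (2 * u₀)) := (div_mul_cancel₀ _ (by positivity)).symm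
    _ ≤ B * (x ^ (n + 1) * G x) :=
        mul_le_mul (le_max_left _ _) (mul_le_mul (pow_le_pow_left₀ hu₀.le hx.1 _) (hG hx.2)
          (hG0 _) (by positivity)) (by positivity) hB0

theorem IsRegularlyVarying.tendsto_integral_pow_mul_ratio {ρ : ℝ} (hreg : IsRegularlyVarying G ρ)
    (hG : Antitone G) (hpos : ∀ u, 0 < G u) (n : ℕ) {ε : ℝ} (hε : 0 < ε) (hε1 : ε ≤ 1) :
    Tendsto (fun x => ∫ s in ε..1, s ^ n * (G (s * x) / G x)) atTop
      (𝓝 (∫ s in ε..1, s ^ n * s ^ ρ)) := by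
  refine intervalIntegral.tendsto_integral_filter_of_dominated_convergence (fun _ => ε ^ ρ + 1)
    (Eventually.of_forall fun x => ((measurable_id.pow_const n).mul
      ((hG.measurable.comp (measurable_id.mul_const x)).div_const _)).aestronglyMeasurable)
    ?_ intervalIntegrable_const ?_
  · filter_upwards [(hreg ε hε).eventually (eventually_lt_nhds (lt_add_one _)),
      eventually_gt_atTop 0] with x hεx hx
    refine Eventually.of_forall fun s hs => ?_
    rw [uIoc_of_le hε1] at hs
    have hs0 : 0 < s := hε.trans hs.1
    have hGsx := hpos (s * x)
    have hGx := hpos x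
    rw [Real.norm_of_nonneg (by positivity)]
    calc s ^ n * (G (s * x) / G x) ≤ 1 * (G (ε * x) / G x) := by
          gcongr
          · exact pow_le_one₀ hs0.le hs.2
          · exact hG (by nlinarith [hs.1])
      _ ≤ ε ^ ρ + 1 := by linarith
  · refine Eventually.of_forall fun s hs => ?_
    rw [uIoc_of_le hε1] at hs
    exact (hreg s (hε.trans hs.1)).const_mul (s ^ n)

theorem abs_integral_pow_mul_div_sub_le (hG : Antitone G) (hpos : ∀ u, 0 < G u) {B u₀ : ℝ}
    (hI : ∀ y, u₀ ≤ y → ∫ t in 0..y, t ^ n * G t ≤ B * (y ^ (n + 1) * G y))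
    {ε x : ℝ} (hε : 0 < ε) (hx : 0 < x) (hεx : u₀ ≤ ε * x) (L : ℝ) :
    |(∫ t in 0..x, t ^ n * G t) / (x ^ (n + 1) * G x) - L|
      ≤ B * ε ^ (n + 1) * (G (ε * x) / G x) + |(∫ s in ε..1, s ^ n * (G (s * x) / G x)) - L| := by
  have hGx := hpos x
  have hGεx := hpos (ε * x)
  have hsplit : ∫ t in 0..x, t ^ n * G t
      = (∫ t in 0..ε * x, t ^ n * G t) + x ^ (n + 1) * ∫ s in ε..1, s ^ n * G (s * x) := by
    rw [← integral_pow_mul_comp_mul_right n hx.ne', mul_comm ε, one_mul,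
      intervalIntegral.integral_add_adjacent_intervals (hG.intervalIntegrable_pow_mul n _ _)
        (hG.intervalIntegrable_pow_mul n _ _)]
  have htail : ∫ s in ε..1, s ^ n * (G (s * x) / G x)
      = (∫ s in ε..1, s ^ n * G (s * x)) / G x := by
    simp only [← mul_div_assoc, intervalIntegral.integral_div]
  have hhead0 : 0 ≤ ∫ t in 0..ε * x, t ^ n * G t :=
    intervalIntegral.integral_nonneg (by positivity) fun t ht =>
      mul_nonneg (pow_nonneg ht.1 n) (hpos t).le
  have hhead : (∫ t in 0..ε * x, t ^ n * G t) / (x ^ (n + 1) * G x)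
      ≤ B * ε ^ (n + 1) * (G (ε * x) / G x) := by
    rw [div_le_iff₀ (by positivity)]
    calc ∫ t in 0..ε * x, t ^ n * G t ≤ B * ((ε * x) ^ (n + 1) * G (ε * x)) := hI _ hεx
      _ = B * ε ^ (n + 1) * (G (ε * x) / G x) * (x ^ (n + 1) * G x) := by
        field_simp
        ring
  have hdecomp : (∫ t in 0..x, t ^ n * G t) / (x ^ (n + 1) * G x) - L
      = (∫ t in 0..ε * x, t ^ n * G t) / (x ^ (n + 1) * G x)
        + ((∫ s in ε..1, s ^ n * (G (s * x) / G x)) - L) := by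
    rw [htail, hsplit]
    field_simp
    ring
  rw [hdecomp]
  refine (abs_add_le _ _).trans ?_
  rw [abs_of_nonneg (div_nonneg hhead0 (by positivity))]
  linarith

theorem IsRegularlyVarying.tendsto_integral_pow_mul_div_pow_mul (hreg : IsRegularlyVarying G (-α))
    (hG : Antitone G) (hpos : ∀ u, 0 < G u) (hα : α < n + 1) :
    Tendsto (fun x => (∫ t in 0..x, t ^ n * G t) / (x ^ (n + 1) * G x)) atTop
      (𝓝 (1 / (n + 1 - α))) := by
  have hr : 0 < (n : ℝ) + 1 - α := sub_pos.2 hα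
  obtain ⟨B, u₀, hu₀, hI⟩ := hreg.exists_integral_pow_mul_le hG hpos hα
  refine tendsto_of_forall_eventually_abs_sub_le
    (e := fun ε => (B + 1 / (n + 1 - α)) * ε ^ ((n : ℝ) + 1 - α)) ?_ ?_
  · have : ContinuousAt (fun ε : ℝ => (B + 1 / (n + 1 - α)) * ε ^ ((n : ℝ) + 1 - α)) 0 :=
      continuousAt_const.mul (Real.continuousAt_rpow_const 0 _ (Or.inr hr.le))
    simpa [Real.zero_rpow hr.ne'] using this.tendsto.mono_left nhdsWithin_le_nhds
  filter_upwards [Ioo_mem_nhdsGT one_pos] with ε ⟨hε0, hε1⟩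
  refine ⟨fun x => B * ε ^ (n + 1) * (G (ε * x) / G x)
      + |(∫ s in ε..1, s ^ n * (G (s * x) / G x)) - 1 / (n + 1 - α)|, ?_, ?_⟩
  · have hlim := ((hreg ε hε0).const_mul (B * ε ^ (n + 1))).add
      ((hreg.tendsto_integral_pow_mul_ratio hG hpos n hε0 hε1.le).sub_const
        (1 / ((n : ℝ) + 1 - α))).abs
    have hεr : ε ^ (n + 1) * ε ^ (-α) = ε ^ ((n : ℝ) + 1 - α) := by
      rw [← Real.rpow_natCast, ← Real.rpow_add hε0]
      push_cast
      ring_nf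
    rw [integral_pow_mul_rpow_neg n hα hε0, mul_assoc, hεr,
      show (1 - ε ^ ((n : ℝ) + 1 - α)) / (n + 1 - α) - 1 / (n + 1 - α)
        = -(ε ^ ((n : ℝ) + 1 - α) / (n + 1 - α)) by ring,
      abs_neg, abs_of_nonneg (by positivity)] at hlim
    convert hlim using 2
    ring
  filter_upwards [eventually_ge_atTop (u₀ / ε)] with x hx
  exact abs_integral_pow_mul_div_sub_le hG hpos hI hε0 ((div_pos hu₀ hε0).trans_le hx)
    (by rwa [div_le_iff₀' hε0] at hx) _

end PowMulIntegral

section TruncatedMoment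

variable {Ω : Type*} [MeasurableSpace Ω] {μ : Measure Ω} [IsFiniteMeasure μ] {Y : Ω → ℝ}

theorem antitone_measureReal_lt : Antitone fun t => μ.real {ω | t < Y ω} :=
  fun _ _ hst => measureReal_mono fun _ hω => hst.trans_lt hω

theorem measureReal_lt_pos (hpos : ∀ u, 0 < u → 0 < μ {ω | u < Y ω}) (u : ℝ) :
    0 < μ.real {ω | u < Y ω} :=
  (ENNReal.toReal_pos (hpos _ (lt_max_of_lt_right one_pos)).ne' (measure_ne_top _ _)).trans_le
    (antitone_measureReal_lt (le_max_left u 1))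

theorem integral_pow_eq_integral_pow_mul_measureReal_lt (hY : AEMeasurable Y μ) (hY0 : 0 ≤ᵐ[μ] Y)
    {x : ℝ} (hx : 0 ≤ x) (hYx : ∀ᵐ ω ∂μ, Y ω ≤ x) (n : ℕ) :
    ∫ ω, Y ω ^ (n + 1) ∂μ = (n + 1) * ∫ t in 0..x, t ^ n * μ.real {ω | t < Y ω} := by
  have hlayer := lintegral_comp_eq_lintegral_meas_lt_mul μ hY0 hY
    (g := fun t => (n + 1) * t ^ n)
    (fun t _ => (continuous_const.mul (continuous_pow n)).intervalIntegrable 0 t)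
    (by filter_upwards [ae_restrict_mem measurableSet_Ioi] with t (ht : 0 < t); positivity)
  have hprim : ∀ y : ℝ, ∫ t in 0..y, ((n : ℝ) + 1) * t ^ n = y ^ (n + 1) := fun y => by
    rw [intervalIntegral.integral_const_mul, integral_pow]
    field_simp
    simp
  simp only [hprim] at hlayer
  have htail : ∀ t ∈ Ioi x, μ {ω | t < Y ω} * ENNReal.ofReal ((n + 1) * t ^ n) = 0 :=
    fun t ht => by
      have : μ {ω | t < Y ω} = 0 :=
        measure_mono_null (fun ω hω => not_le.2 (lt_trans ht hω)) (ae_iff.mp hYx)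
      rw [this, zero_mul]
  have hIoc : ∫⁻ t in Ioi 0, μ {ω | t < Y ω} * ENNReal.ofReal ((n + 1) * t ^ n)
      = ∫⁻ t in Ioc 0 x, μ {ω | t < Y ω} * ENNReal.ofReal ((n + 1) * t ^ n) := by
    rw [← Ioc_union_Ioi_eq_Ioi hx, lintegral_union measurableSet_Ioi Ioc_disjoint_Ioi_same,
      setLIntegral_congr_fun measurableSet_Ioi htail, lintegral_zero, add_zero]
  have hY0' : 0 ≤ᵐ[μ] fun ω => Y ω ^ (n + 1) := by
    filter_upwards [hY0] with ω hω
    exact pow_nonneg hω _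
  have hF0 : 0 ≤ᵐ[volume.restrict (Ioc 0 x)] fun t => (n + 1) * (t ^ n * μ.real {ω | t < Y ω}) := by
    filter_upwards [ae_restrict_mem measurableSet_Ioc] with t ht
    have := ht.1.le
    positivity
  rw [integral_eq_lintegral_of_nonneg_ae hY0' (hY.pow_const _).aestronglyMeasurable, hlayer, hIoc,
    intervalIntegral.integral_of_le hx, ← integral_const_mul,
    integral_eq_lintegral_of_nonneg_ae hF0 ?_]
  · congr 1
    refine setLIntegral_congr_fun measurableSet_Ioc fun t ht => ?_
    have := ht.1.le
    rw [← mul_assoc, ENNReal.ofReal_mul (by positivity : (0 : ℝ) ≤ (n + 1) * t ^ n),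
      ofReal_measureReal, mul_comm]
  · exact (measurable_const.mul ((measurable_id.pow_const n).mul
      antitone_measureReal_lt.measurable)).aestronglyMeasurable

theorem setIntegral_pow_le_eq (hY : Measurable Y) (hY0 : 0 ≤ Y) {x : ℝ} (hx : 0 ≤ x) (n : ℕ) :
    ∫ ω in {ω | Y ω ≤ x}, Y ω ^ (n + 1) ∂μ
      = (n + 1) * (∫ t in 0..x, t ^ n * μ.real {ω | t < Y ω})
        - x ^ (n + 1) * μ.real {ω | x < Y ω} := by
  have hS : MeasurableSet {ω | Y ω ≤ x} := hY measurableSet_Iic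
  have htail : EqOn (fun t => t ^ n * (μ.restrict {ω | Y ω ≤ x}).real {ω | t < Y ω})
      (fun t => t ^ n * μ.real {ω | t < Y ω} - μ.real {ω | x < Y ω} * t ^ n) (uIcc 0 x) := by
    intro t ht
    rw [uIcc_of_le hx] at ht
    have hdiff : {ω | t < Y ω} ∩ {ω | Y ω ≤ x} = {ω | t < Y ω} \ {ω | x < Y ω} := by
      ext ω
      simp [not_lt]
    dsimp only
    rw [measureReal_restrict_apply (measurableSet_lt measurable_const hY), hdiff,
      measureReal_sdiff (μ := μ) (s₁ := {ω | t < Y ω}) (s₂ := {ω | x < Y ω})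
        (fun ω hω => ht.2.trans_lt hω)
        (measurableSet_lt measurable_const hY)]
    ring
  rw [integral_pow_eq_integral_pow_mul_measureReal_lt (μ := μ.restrict {ω | Y ω ≤ x})
      hY.aemeasurable (ae_of_all _ hY0) hx (ae_restrict_mem hS) n,
    intervalIntegral.integral_congr htail,
    intervalIntegral.integral_sub (antitone_measureReal_lt.intervalIntegrable_pow_mul n 0 x)
      (((continuous_pow n).intervalIntegrable 0 x).const_mul _),
    intervalIntegral.integral_const_mul, integral_pow, zero_pow n.succ_ne_zero, sub_zero, mul_sub]
  congr 1
  field_simp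

theorem IsRegularlyVarying.tendsto_setIntegral_pow_le_div {α : ℝ} {n : ℕ} (hY : Measurable Y)
    (hY0 : 0 ≤ Y) (hpos : ∀ u, 0 < μ.real {ω | u < Y ω})
    (hreg : IsRegularlyVarying (fun u => μ.real {ω | u < Y ω}) (-α)) (hα : α < n + 1) :
    Tendsto (fun x => (∫ ω in {ω | Y ω ≤ x}, Y ω ^ (n + 1) ∂μ)
        / (x ^ (n + 1) * μ.real {ω | x < Y ω})) atTop (𝓝 (α / (n + 1 - α))) := by
  have hr : (n : ℝ) + 1 - α ≠ 0 := (sub_pos.2 hα).ne'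
  have hlim := ((hreg.tendsto_integral_pow_mul_div_pow_mul antitone_measureReal_lt hpos
    hα).const_mul ((n : ℝ) + 1)).sub_const 1
  rw [show ((n : ℝ) + 1) * (1 / (n + 1 - α)) - 1 = α / (n + 1 - α) by field_simp; ring] at hlim
  refine hlim.congr' ?_
  filter_upwards [eventually_gt_atTop 0] with x hx
  have := hpos x
  rw [setIntegral_pow_le_eq hY hY0 hx.le n]
  field_simp

theorem IsRegularlyVarying.tendsto_natCast_div_mul_setIntegral_pow_le {α : ℝ} {n : ℕ}
    (hY : Measurable Y) (hY0 : 0 ≤ Y) (hpos : ∀ u, 0 < μ.real {ω | u < Y ω})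
    (hreg : IsRegularlyVarying (fun u => μ.real {ω | u < Y ω}) (-α)) (hα : α < n + 1)
    {a : ℕ → ℝ} (ha : Tendsto a atTop atTop)
    (haN : Tendsto (fun N : ℕ => (N : ℝ) * μ.real {ω | a N < Y ω}) atTop (𝓝 1))
    {l : ℝ} (hl : 0 < l) :
    Tendsto (fun N : ℕ => (N : ℝ) / (l * a N) ^ (n + 1)
        * ∫ ω in {ω | Y ω ≤ l * a N}, Y ω ^ (n + 1) ∂μ) atTop
      (𝓝 (l ^ (-α) * (α / (n + 1 - α)))) := by
  have hlim := (haN.mul ((hreg l hl).comp ha)).mul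
    ((hreg.tendsto_setIntegral_pow_le_div hY hY0 hpos hα).comp (ha.const_mul_atTop hl))
  rw [one_mul] at hlim
  refine hlim.congr' ?_
  filter_upwards [ha.eventually (eventually_gt_atTop 0)] with N hN
  have hGa := hpos (a N)
  have hGla := hpos (l * a N)
  have hlN : 0 < l * a N := mul_pos hl hN
  simp only [Function.comp_apply]
  set x := l * a N
  field_simp

end TruncatedMoment

/-- Let `X` be a random element of a normed space with
`P(‖X‖ > u) > 0` for all `u > 0` and with `u ↦ u^α P(‖X‖ > u)` slowly varying,
`α ∈ (2,4)`. If `a_N → ∞` with `N P(‖X‖ > a_N) → 1` and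
`k_N = (α/(4−α))^{2/α} a_N²`, then `N k_N⁻² E[‖X‖⁴ 1{‖X‖² ≤ k_N}] → 1`. -/
theorem statement12 {Ω : Type*} [MeasureSpace Ω] [IsProbabilityMeasure (ℙ : Measure Ω)]
    {E : Type*} [NormedAddCommGroup E]
    (X : Ω → E) (hmeas : Measurable fun ω => ‖X ω‖)
    (α : ℝ) (hα2 : 2 < α) (hα4 : α < 4)
    (hpos : ∀ u : ℝ, 0 < u → 0 < ℙ {ω | u < ‖X ω‖})
    (hslow : ∀ l : ℝ, 0 < l →
      Tendsto (fun u : ℝ =>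
          ((l * u) ^ α * (ℙ {ω | l * u < ‖X ω‖}).toReal)
            / (u ^ α * (ℙ {ω | u < ‖X ω‖}).toReal))
        atTop (𝓝 1))
    (a : ℕ → ℝ) (ha : Tendsto a atTop atTop)
    (haN : Tendsto (fun N : ℕ => (N : ℝ) * (ℙ {ω | a N < ‖X ω‖}).toReal)
      atTop (𝓝 1))
    (k : ℕ → ℝ) (hk : ∀ N, k N = (α / (4 - α)) ^ (2 / α) * a N ^ 2) :
    Tendsto (fun N : ℕ =>
        (N : ℝ) / k N ^ 2 * ∫ ω in {ω | ‖X ω‖ ^ 2 ≤ k N}, ‖X ω‖ ^ 4 ∂ℙ)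
      atTop (𝓝 1) := by
  have hreg : IsRegularlyVarying (fun u => (ℙ : Measure Ω).real {ω | u < ‖X ω‖}) (-α) := by
    simpa using IsRegularlyVarying.of_rpow_mul (ρ := 0) fun l hl => by
      rw [Real.rpow_zero]
      exact hslow l hl
  have hb : 0 < α / (4 - α) := div_pos (by linarith) (by linarith)
  set l := (α / (4 - α)) ^ α⁻¹
  have hl : 0 < l := Real.rpow_pos_of_pos hb _
  have hlim := hreg.tendsto_natCast_div_mul_setIntegral_pow_le (n := 3) hmeas
    (fun ω => norm_nonneg _) (measureReal_lt_pos hpos) (by norm_num; linarith) ha haN hl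
  rw [show ((3 : ℕ) : ℝ) + 1 - α = 4 - α by norm_num,
    rpow_inv_rpow_neg_mul_self hb (by linarith)] at hlim
  refine hlim.congr' ?_
  filter_upwards [ha.eventually (eventually_gt_atTop 0)] with N hN
  have hkN : k N = (l * a N) ^ 2 := by
    rw [hk, mul_pow, ← Real.rpow_natCast l 2, ← Real.rpow_mul hb.le, Nat.cast_ofNat,
      inv_mul_eq_div]
  have hset : {ω | ‖X ω‖ ^ 2 ≤ k N} = {ω | ‖X ω‖ ≤ l * a N} := by
    ext ω
    rw [mem_ofPred_eq, mem_ofPred_eq, hkN,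
      pow_le_pow_iff_left₀ (norm_nonneg _) (mul_pos hl hN).le two_ne_zero]
  rw [hset, hkN, ← pow_mul]
end
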